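/- arXiv:2011.05464 — 5 statements merged into one kernel-verified Lean document; each statement's English description precedes it below -/
import Mathlib

section
/- For a separable metrizable space X the following are equivalent: (1) X is almost zero-dimensional; (2) the hyperspace K(X) with the Vietoris topology is almost zero-dimensional; (3) every subspace 𝒜 of K(X) with F_1(X) ⊆ 𝒜 ⊆ K(X) is almost zero-dimensional. -/
open Set Topology

noncomputable section

/-- The Vietoris topology on the powerset of `X` induced by a topology `τ`,
generated by the sets `{F | F ⊆ U}` and `{F | F ∩ U ≠ ∅}` for `U` a nonempty `τ`-open set. -/
def VietorisTop {X : Type*} (τ : TopologicalSpace X) : TopologicalSpace (Set X) :=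
  TopologicalSpace.generateFrom
    ({S : Set (Set X) | ∃ U : Set X, IsOpen[τ] U ∧ U.Nonempty ∧ S = {F : Set X | F ⊆ U}} ∪
     {S : Set (Set X) | ∃ U : Set X, IsOpen[τ] U ∧ U.Nonempty ∧ S = {F : Set X | (F ∩ U).Nonempty}})

/-- The hyperspace `K(X)` of nonempty compact subsets of `X`. -/
def HypK (X : Type*) [TopologicalSpace X] : Type _ := {F : Set X // F.Nonempty ∧ IsCompact F}

/-- `K(X)` carries the Vietoris topology. -/
instance (X : Type*) [τ : TopologicalSpace X] : TopologicalSpace (HypK X) :=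
  (VietorisTop τ).induced Subtype.val

/-- The `n`-th symmetric product `F_n(X)`: nonempty subsets of `X` with at most `n` points. -/
def HypFn (n : ℕ) (X : Type*) [TopologicalSpace X] : Type _ :=
  {F : Set X // F.Nonempty ∧ F.Finite ∧ F.ncard ≤ n}

/-- `F_n(X)` carries the Vietoris topology. -/
instance (n : ℕ) (X : Type*) [τ : TopologicalSpace X] : TopologicalSpace (HypFn n X) :=
  (VietorisTop τ).induced Subtype.val

/-- The hyperspace `F(X)` of nonempty finite subsets of `X`. -/
def HypFin (X : Type*) [TopologicalSpace X] : Type _ := {F : Set X // F.Nonempty ∧ F.Finite}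

/-- `F(X)` carries the Vietoris topology. -/
instance (X : Type*) [τ : TopologicalSpace X] : TopologicalSpace (HypFin X) :=
  (VietorisTop τ).induced Subtype.val

/-- A space is almost zero-dimensional if every point has a neighborhood basis consisting of
sets each of which is an intersection of clopen sets. -/
def IsAZD (X : Type*) [TopologicalSpace X] : Prop :=
  ∀ x : X, ∀ U ∈ nhds x, ∃ V ∈ nhds x, V ⊆ U ∧
    ∃ C : Set (Set X), (∀ c ∈ C, IsClopen c) ∧ V = ⋂₀ C

/-- `X` is `𝒜`-cohesive: every point has a neighborhood containing no nonempty proper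
subset of an element `A ∈ 𝒜` that is clopen in the subspace topology of `A`. -/
def CohesiveWrt (X : Type*) [TopologicalSpace X] (𝒜 : Set (Set X)) : Prop :=
  ∀ x : X, ∃ U ∈ nhds x, ∀ A ∈ 𝒜, ∀ C : Set X,
    C ⊆ U → C ⊆ A → C.Nonempty → C ≠ A → ¬ IsClopen {y : A | (y : X) ∈ C}

/-- A space is cohesive if it is `{X}`-cohesive. -/
def Cohesive (X : Type*) [TopologicalSpace X] : Prop := CohesiveWrt X {Set.univ}

/-- Erdős space: the rational points of the Hilbert space `ℓ²`. -/
def ErdosSpace : Type :=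
  {x : lp (fun _ : ℕ => ℝ) 2 // ∀ n : ℕ, ∃ q : ℚ, x.val n = (q : ℝ)}

instance : TopologicalSpace ErdosSpace := by unfold ErdosSpace; infer_instance

/-- Complete Erdős space: points of `ℓ²` all of whose coordinates lie in `{0} ∪ {1/m : m ≥ 1}`. -/
def CompleteErdosSpace : Type :=
  {x : lp (fun _ : ℕ => ℝ) 2 // ∀ n : ℕ, x.val n = 0 ∨ ∃ m : ℕ, 0 < m ∧ x.val n = 1 / (m : ℝ)}

instance : TopologicalSpace CompleteErdosSpace := by unfold CompleteErdosSpace; infer_instance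

/-!
Singletons embed `X` into `K(X)` and almost zero-dimensionality passes to subspaces, which gives
every implication except `X → K(X)`. For that one it suffices to find, inside each subbasic open
set `{G | G ⊆ U}` or `{G | G ∩ U ≠ ∅}` of `K(X)`, a neighbourhood of each of its points that is an
intersection of clopen sets. If `V = ⋂₀ C` with all `c ∈ C` clopen, then
`{G | G ⊆ V} = ⋂_{c ∈ C} {G | G ⊆ c}` and, since each `G` is compact, `{G | G ∩ V ≠ ∅}` is the
intersection of the clopen sets `{G | G ∩ c₁ ∩ ⋯ ∩ cₙ ≠ ∅}` with `cᵢ ∈ C`. In the first case `V` is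
a finite union of such sets covering the compact set `F ⊆ U`, and a finite union of intersections
of clopen sets is again one.
-/

open TopologicalSpace

section InterOfClopens

variable {X : Type*} [TopologicalSpace X]

def IsInterOfClopens (V : Set X) : Prop :=
  ∃ C : Set (Set X), (∀ c ∈ C, IsClopen c) ∧ V = ⋂₀ C

theorem IsClopen.isInterOfClopens {c : Set X} (hc : IsClopen c) : IsInterOfClopens c :=
  ⟨{c}, by simpa using hc, sInter_singleton c |>.symm⟩

theorem isInterOfClopens_iInter {ι : Sort*} {V : ι → Set X} (hV : ∀ i, IsInterOfClopens (V i)) :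
    IsInterOfClopens (⋂ i, V i) := by
  choose C hC hVC using hV
  refine ⟨⋃ i, C i, fun c hc => ?_, ?_⟩
  · obtain ⟨i, hi⟩ := mem_iUnion.mp hc
    exact hC i c hi
  · rw [sInter_iUnion]
    exact iInter_congr hVC

theorem IsInterOfClopens.inter {V W : Set X} (hV : IsInterOfClopens V)
    (hW : IsInterOfClopens W) : IsInterOfClopens (V ∩ W) := by
  obtain ⟨C, hC, rfl⟩ := hV
  obtain ⟨D, hD, rfl⟩ := hW
  exact ⟨C ∪ D, fun c hc => hc.elim (hC c) (hD c), (sInter_union C D).symm⟩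

theorem IsInterOfClopens.union {V W : Set X} (hV : IsInterOfClopens V)
    (hW : IsInterOfClopens W) : IsInterOfClopens (V ∪ W) := by
  obtain ⟨C, hC, rfl⟩ := hV
  obtain ⟨D, hD, rfl⟩ := hW
  rw [sInter_union_sInter]
  exact isInterOfClopens_iInter fun p => isInterOfClopens_iInter fun hp =>
    ((hC _ (mem_prod.mp hp).1).union (hD _ (mem_prod.mp hp).2)).isInterOfClopens

theorem IsInterOfClopens.preimage {Y : Type*} [TopologicalSpace Y] {f : X → Y} {V : Set Y}
    (hV : IsInterOfClopens V) (hf : Continuous f) : IsInterOfClopens (f ⁻¹' V) := by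
  obtain ⟨C, hC, rfl⟩ := hV
  rw [preimage_sInter]
  exact isInterOfClopens_iInter fun c => isInterOfClopens_iInter fun hc =>
    ((hC c hc).preimage hf).isInterOfClopens

end InterOfClopens

section AlmostZeroDimensional

variable {X : Type*} [TopologicalSpace X]

theorem isAZD_of_generateFrom {g : Set (Set X)} (hg : ‹TopologicalSpace X› = generateFrom g)
    (h : ∀ s ∈ g, ∀ x ∈ s, ∃ V ∈ 𝓝 x, V ⊆ s ∧ IsInterOfClopens V) : IsAZD X := by
  have hOpen : ∀ U : Set X, IsOpen U → ∀ x ∈ U, ∃ V ∈ 𝓝 x, V ⊆ U ∧ IsInterOfClopens V := by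
    intro U hU
    rw [hg] at hU
    induction hU with
    | basic s hs => exact h s hs
    | univ => exact fun x _ => ⟨univ, Filter.univ_mem, subset_rfl, isClopen_univ.isInterOfClopens⟩
    | inter s u _ _ ihs ihu =>
      rintro x ⟨hxs, hxu⟩
      obtain ⟨V, hV, hVs, hVC⟩ := ihs x hxs
      obtain ⟨W, hW, hWu, hWC⟩ := ihu x hxu
      exact ⟨V ∩ W, Filter.inter_mem hV hW, inter_subset_inter hVs hWu, hVC.inter hWC⟩
    | sUnion S _ ih =>
      rintro x ⟨s, hs, hxs⟩
      obtain ⟨V, hV, hVs, hVC⟩ := ih s hs x hxs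
      exact ⟨V, hV, hVs.trans (subset_sUnion_of_mem hs), hVC⟩
  intro x U hU
  obtain ⟨O, hOU, hO, hxO⟩ := mem_nhds_iff.mp hU
  obtain ⟨V, hV, hVO, hVC⟩ := hOpen O hO x hxO
  exact ⟨V, hV, hVO.trans hOU, hVC⟩

theorem IsAZD.of_isInducing {Y : Type*} [TopologicalSpace Y] {f : X → Y}
    (hf : IsInducing f) (hY : IsAZD Y) : IsAZD X := by
  intro x U hU
  obtain ⟨S, hS, hSU⟩ := (hf.nhds_eq_comap x ▸ hU : U ∈ (𝓝 (f x)).comap f)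
  obtain ⟨V, hV, hVS, hVC⟩ := hY (f x) S hS
  exact ⟨f ⁻¹' V, hf.continuous.continuousAt.preimage_mem_nhds hV,
    (preimage_mono hVS).trans hSU, IsInterOfClopens.preimage hVC hf.continuous⟩

theorem IsAZD.exists_isInterOfClopens_mem_nhdsSet (h : IsAZD X) {K U : Set X}
    (hK : IsCompact K) (hU : IsOpen U) (hKU : K ⊆ U) :
    ∃ V ∈ 𝓝ˢ K, V ⊆ U ∧ IsInterOfClopens V := by
  refine hK.induction_on (p := fun K => ∃ V ∈ 𝓝ˢ K, V ⊆ U ∧ IsInterOfClopens V)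
    ⟨∅, by simp, empty_subset U, isClopen_empty.isInterOfClopens⟩ ?_ ?_ ?_
  · exact fun s t hst ⟨V, hV, hVU, hVC⟩ => ⟨V, nhdsSet_mono hst hV, hVU, hVC⟩
  · rintro s t ⟨V, hV, hVU, hVC⟩ ⟨W, hW, hWU, hWC⟩
    exact ⟨V ∪ W, union_mem_nhdsSet hV hW, union_subset hVU hWU, hVC.union hWC⟩
  · intro x hx
    obtain ⟨V, hV, hVU, hVC⟩ := h x U (hU.mem_nhds (hKU hx))
    exact ⟨interior V, mem_nhdsWithin_of_mem_nhds (interior_mem_nhds.mpr hV),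
      V, subset_interior_iff_mem_nhdsSet.mp subset_rfl, hVU, hVC⟩

end AlmostZeroDimensional

namespace HypK

attribute [local instance] TopologicalSpace.vietoris

variable {X : Type*} [TopologicalSpace X]

/-- `VietorisTop` only uses nonempty `U`, so on `Set X` it may differ from `vietoris` near `∅`;
on nonempty sets the two agree. -/
theorem isInducing_val : IsInducing (X := HypK X) Subtype.val := by
  refine ⟨?_⟩
  change (VietorisTop _).induced Subtype.val = (TopologicalSpace.vietoris X).induced Subtype.val
  rw [VietorisTop, TopologicalSpace.vietoris, induced_generateFrom_eq, induced_generateFrom_eq]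
  refine le_antisymm (le_generateFrom ?_) (le_generateFrom ?_)
  · rintro _ ⟨_, ⟨U, hU, rfl⟩ | ⟨U, hU, rfl⟩, rfl⟩ <;> rcases U.eq_empty_or_nonempty with rfl | hne
    · convert isOpen_empty
      ext G
      simp [G.2.1.ne_empty]
    · exact isOpen_generateFrom_of_mem ⟨_, Or.inl ⟨U, hU, hne, rfl⟩, rfl⟩
    · convert isOpen_empty
      ext G
      simp
    · exact isOpen_generateFrom_of_mem ⟨_, Or.inr ⟨U, hU, hne, rfl⟩, rfl⟩
  · rintro _ ⟨_, ⟨U, hU, -, rfl⟩ | ⟨U, hU, -, rfl⟩, rfl⟩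
    · exact isOpen_generateFrom_of_mem ⟨_, Or.inl ⟨U, hU, rfl⟩, rfl⟩
    · exact isOpen_generateFrom_of_mem ⟨_, Or.inr ⟨U, hU, rfl⟩, rfl⟩

theorem isOpen_setOf_subset {U : Set X} (hU : IsOpen U) : IsOpen {G : HypK X | G.val ⊆ U} :=
  hU.powerset_vietoris.preimage isInducing_val.continuous

theorem isOpen_setOf_inter_nonempty {U : Set X} (hU : IsOpen U) :
    IsOpen {G : HypK X | (G.val ∩ U).Nonempty} :=
  (vietoris.isOpen_inter_nonempty_of_isOpen hU).preimage isInducing_val.continuous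

theorem isClopen_setOf_subset {c : Set X} (hc : IsClopen c) :
    IsClopen {G : HypK X | G.val ⊆ c} :=
  ⟨hc.1.powerset_vietoris.preimage isInducing_val.continuous, isOpen_setOf_subset hc.2⟩

theorem isClopen_setOf_inter_nonempty {c : Set X} (hc : IsClopen c) :
    IsClopen {G : HypK X | (G.val ∩ c).Nonempty} :=
  ⟨(vietoris.isClosed_inter_nonempty_of_isClosed hc.1).preimage isInducing_val.continuous,
    isOpen_setOf_inter_nonempty hc.2⟩

theorem setOf_subset_mem_nhds {F : HypK X} {V : Set X} (hV : V ∈ 𝓝ˢ F.val) :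
    {G : HypK X | G.val ⊆ V} ∈ 𝓝 F :=
  Filter.mem_of_superset ((isOpen_setOf_subset isOpen_interior).mem_nhds
    (subset_interior_iff_mem_nhdsSet.mpr hV)) fun _ hG => hG.trans interior_subset

theorem setOf_inter_nonempty_mem_nhds {F : HypK X} {x : X} (hx : x ∈ F.val) {V : Set X}
    (hV : V ∈ 𝓝 x) : {G : HypK X | (G.val ∩ V).Nonempty} ∈ 𝓝 F :=
  Filter.mem_of_superset ((isOpen_setOf_inter_nonempty isOpen_interior).mem_nhds
    ⟨x, hx, mem_interior_iff_mem_nhds.mpr hV⟩)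
    fun _ hG => hG.mono (inter_subset_inter_right _ interior_subset)

theorem isInterOfClopens_setOf_subset {V : Set X} (hV : IsInterOfClopens V) :
    IsInterOfClopens {G : HypK X | G.val ⊆ V} := by
  obtain ⟨C, hC, rfl⟩ := hV
  simp_rw [subset_sInter_iff, ofPred_forall]
  exact isInterOfClopens_iInter fun c => isInterOfClopens_iInter fun hc =>
    (isClopen_setOf_subset (hC c hc)).isInterOfClopens

theorem isInterOfClopens_setOf_inter_nonempty {V : Set X} (hV : IsInterOfClopens V) :
    IsInterOfClopens {G : HypK X | (G.val ∩ V).Nonempty} := by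
  obtain ⟨C, hC, rfl⟩ := hV
  have hfinite : {G : HypK X | (G.val ∩ ⋂₀ C).Nonempty} =
      ⋂ u : Finset C, {G : HypK X | (G.val ∩ ⋂ c ∈ u, (c : Set X)).Nonempty} := by
    ext G
    simp only [mem_ofPred_eq, mem_iInter]
    refine ⟨fun hG u => hG.mono (inter_subset_inter_right _ ?_), fun hG => ?_⟩
    · exact subset_iInter₂ fun c _ => sInter_subset_of_mem c.2
    · rw [sInter_eq_iInter]
      exact G.2.2.inter_iInter_nonempty _ (fun c => (hC c c.2).1) hG
  rw [hfinite]
  exact isInterOfClopens_iInter fun u => (isClopen_setOf_inter_nonempty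
    (isClopen_biInter_finset fun (c : C) _ => hC c c.2)).isInterOfClopens

def singleton (x : X) : HypK X := ⟨{x}, singleton_nonempty x, isCompact_singleton⟩

theorem isInducing_singleton : IsInducing (singleton : X → HypK X) :=
  isInducing_val.of_comp_iff.mp vietoris.isEmbedding_singleton.isInducing

theorem _root_.IsAZD.hypK (h : IsAZD X) : IsAZD (HypK X) := by
  refine isAZD_of_generateFrom (isInducing_val.eq_induced.trans induced_generateFrom_eq) ?_
  rintro _ ⟨_, ⟨U, hU, rfl⟩ | ⟨U, hU, rfl⟩, rfl⟩ F hF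
  · obtain ⟨V, hV, hVU, hVC⟩ := h.exists_isInterOfClopens_mem_nhdsSet F.2.2 hU hF
    exact ⟨_, setOf_subset_mem_nhds hV, fun G hG => hG.trans hVU,
      isInterOfClopens_setOf_subset hVC⟩
  · obtain ⟨x, hxF, hxU⟩ := hF
    obtain ⟨V, hV, hVU, hVC⟩ := h x U (hU.mem_nhds hxU)
    exact ⟨_, setOf_inter_nonempty_mem_nhds hxF hV,
      fun G hG => hG.mono (inter_subset_inter_right _ hVU),
      isInterOfClopens_setOf_inter_nonempty hVC⟩

end HypK

theorem isAZD_iff_hyperspace_isAZD_general (X : Type*) [TopologicalSpace X] :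
    (IsAZD X ↔ IsAZD (HypK X)) ∧
    (IsAZD X ↔ ∀ 𝒜 : Set (HypK X), {F : HypK X | ∃ x : X, F.val = {x}} ⊆ 𝒜 → IsAZD 𝒜) := by
  refine ⟨⟨IsAZD.hypK, (·.of_isInducing HypK.isInducing_singleton)⟩,
    ⟨fun h _ _ => h.hypK.of_isInducing IsInducing.subtypeVal, fun h => ?_⟩⟩
  exact (h _ subset_rfl).of_isInducing (HypK.isInducing_singleton.codRestrict fun x => by exists x)

/-- For a separable metrizable space `X`: `X` is almost zero-dimensional iff `K(X)` is,
iff every subspace `𝒜` of `K(X)` containing all singletons `F_1(X)` is. -/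
theorem isAZD_iff_hyperspace_isAZD (X : Type*) [TopologicalSpace X]
    [TopologicalSpace.MetrizableSpace X] [TopologicalSpace.SeparableSpace X] :
    (IsAZD X ↔ IsAZD (HypK X)) ∧
    (IsAZD X ↔ ∀ 𝒜 : Set (HypK X), {F : HypK X | ∃ x : X, F.val = {x}} ⊆ 𝒜 → IsAZD 𝒜) :=
  isAZD_iff_hyperspace_isAZD_general X
end
end

section
/- Let n ≥ 1, let X be a separable metrizable space, let S be an index set, and let (A_s)_{s∈S} be a family of subsets of X such that X is {A_s : s ∈ S}-cohesive. Let f : Xⁿ → F_n(X) be the map f(x₁,…,xₙ) = {x₁,…,xₙ}. Then F_n(X), with the Vietoris topology, is {f[A_{s₁} × … × A_{sₙ}] : s₁,…,sₙ ∈ S}-cohesive. -/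
open Set Topology

noncomputable section

lemma vietoris_update_continuous {X : Type*} [τ : TopologicalSpace X] {n : ℕ}
    (z : Fin n → X) (m : Fin n) :
    Continuous[τ, VietorisTop τ] (fun t : X => Set.range (Function.update z m t)) := by
  rw [VietorisTop, continuous_generateFrom_iff]
  rintro s (⟨U, hU, -, rfl⟩ | ⟨U, hU, -, rfl⟩)
  · by_cases h : ∀ i, i ≠ m → z i ∈ U
    · convert hU using 1
      ext t
      simp only [mem_preimage, mem_setOf_eq, range_subset_iff]
      constructor
      · intro ht
        have := ht m
        rwa [Function.update_self] at this
      · intro ht i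
        rcases eq_or_ne i m with rfl | hi
        · rwa [Function.update_self]
        · rw [Function.update_of_ne hi]; exact h i hi
    · convert isOpen_empty using 1
      push_neg at h
      obtain ⟨i, hi, hiU⟩ := h
      ext t
      simp only [mem_preimage, mem_setOf_eq, range_subset_iff, mem_empty_iff_false, iff_false]
      intro ht
      exact hiU (by simpa [Function.update_of_ne hi] using ht i)
  · by_cases h : ∃ i, i ≠ m ∧ z i ∈ U
    · convert isOpen_univ using 1
      obtain ⟨i, hi, hiU⟩ := h
      ext t
      simp only [mem_preimage, mem_setOf_eq, mem_univ, iff_true]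
      exact ⟨z i, ⟨i, Function.update_of_ne hi _ _⟩, hiU⟩
    · convert hU using 1
      push_neg at h
      ext t
      simp only [mem_preimage, mem_setOf_eq]
      constructor
      · rintro ⟨x, ⟨i, rfl⟩, hxU⟩
        rcases eq_or_ne i m with rfl | hi
        · rwa [Function.update_self] at hxU
        · rw [Function.update_of_ne hi] at hxU
          exact absurd hxU (h i hi)
      · intro ht
        exact ⟨t, ⟨m, Function.update_self _ _ _⟩, ht⟩

lemma vietoris_update_continuous' {X α : Type*} [τ : TopologicalSpace X]
    [tα : TopologicalSpace α] {n : ℕ} (z : Fin n → X) (m : Fin n)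
    {g : α → X} (hg : Continuous g) :
    Continuous[tα, VietorisTop τ] (fun t : α => Set.range (Function.update z m (g t))) := by
  have h1 := vietoris_update_continuous (τ := τ) z m
  rw [VietorisTop, continuous_generateFrom_iff] at h1 ⊢
  intro s hs
  exact (h1 s hs).preimage hg

lemma exists_separated_nbhds {X : Type*} [TopologicalSpace X] [TopologicalSpace.MetrizableSpace X]
    {Fv : Set X} (hFv : Fv.Finite) (W : X → Set X) (hW : ∀ p, W p ∈ nhds p) :
    ∃ V V' : X → Set X, (∀ p, IsOpen (V p)) ∧ (∀ p, p ∈ V p) ∧ (∀ p, V p ⊆ V' p) ∧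
      (∀ p, IsClosed (V' p)) ∧ (∀ p, V p ⊆ W p) ∧
      ∀ p ∈ Fv, ∀ q ∈ Fv, p ≠ q → V' p ∩ V' q = ∅ := by
  classical
  letI : MetricSpace X := TopologicalSpace.metrizableSpaceMetric X
  set Fs : Finset X := hFv.toFinset with hFs
  set P : Finset (X × X) := (Fs ×ˢ Fs).filter (fun pq => pq.1 ≠ pq.2) with hP
  set ε : ℝ := if h : P.Nonempty then (P.inf' h fun pq => dist pq.1 pq.2) / 3 else 1 with hε
  have hεpos : 0 < ε := by
    rw [hε]; split_ifs with h
    · apply div_pos _ (by norm_num)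
      rw [Finset.lt_inf'_iff]
      rintro ⟨p, q⟩ hpq
      rw [hP, Finset.mem_filter] at hpq
      exact dist_pos.mpr hpq.2
    · norm_num
  have hsep : ∀ p ∈ Fs, ∀ q ∈ Fs, p ≠ q → 3 * ε ≤ dist p q := by
    intro p hp q hq hne
    have hmem : (p, q) ∈ P := by
      rw [hP, Finset.mem_filter, Finset.mem_product]; exact ⟨⟨hp, hq⟩, hne⟩
    rw [hε, dif_pos ⟨_, hmem⟩]
    have := Finset.inf'_le (fun pq : X × X => dist pq.1 pq.2) hmem
    linarith
  refine ⟨fun p => Metric.ball p ε ∩ interior (W p), fun p => Metric.closedBall p ε,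
    fun p => Metric.isOpen_ball.inter isOpen_interior,
    fun p => ⟨Metric.mem_ball_self hεpos, mem_interior_iff_mem_nhds.mpr (hW p)⟩,
    fun p => (inter_subset_left).trans Metric.ball_subset_closedBall,
    fun p => Metric.isClosed_closedBall,
    fun p => (inter_subset_right).trans interior_subset, ?_⟩
  intro p hp q hq hne
  rw [eq_empty_iff_forall_notMem]
  rintro x ⟨hxp, hxq⟩
  have h1 := hsep p (hFv.mem_toFinset.mpr hp) q (hFv.mem_toFinset.mpr hq) hne
  rw [Metric.mem_closedBall] at hxp hxq
  have h2 : dist p q ≤ dist p x + dist x q := dist_triangle _ _ _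
  rw [dist_comm] at hxp
  linarith

/-- If `X` is `{A_s : s ∈ S}`-cohesive then `F_n(X)` is
`{f[A_{s₁} × ⋯ × A_{sₙ}] : s₁, …, sₙ ∈ S}`-cohesive, where `f(x₁,…,xₙ) = {x₁,…,xₙ}`. -/
theorem hypFn_cohesiveWrt_images {X : Type*} [TopologicalSpace X]
    [TopologicalSpace.MetrizableSpace X] [TopologicalSpace.SeparableSpace X]
    {S : Type*} (A : S → Set X) (n : ℕ) (hn : 1 ≤ n)
    (hX : CohesiveWrt X (Set.range A)) :
    CohesiveWrt (HypFn n X)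
      {B : Set (HypFn n X) | ∃ s : Fin n → S,
        B = {F : HypFn n X | ∃ x : Fin n → X, (∀ i, x i ∈ A (s i)) ∧ F.val = Set.range x}} := by
  classical
  choose W hWnhds hWcoh using hX
  intro F
  obtain ⟨hFne, hFfin, -⟩ := F.2
  obtain ⟨V, V', hVopen, hVmem, hVV', hV'closed, hVW, hV'disj⟩ :=
    exists_separated_nbhds hFfin W hWnhds
  set U0 : Set X := ⋃ p ∈ F.val, V p with hU0
  have hU0open : IsOpen U0 := isOpen_biUnion fun p _ => hVopen p
  obtain ⟨p0, hp0⟩ := hFne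
  have hU0ne : U0.Nonempty := ⟨p0, mem_iUnion₂.mpr ⟨p0, hp0, hVmem p0⟩⟩
  set 𝒰 : Set (HypFn n X) := Subtype.val ⁻¹' {G : Set X | G ⊆ U0} with h𝒰
  have h𝒰open : IsOpen 𝒰 := by
    refine (isOpen_induced_iff (t := VietorisTop _)).mpr ⟨_, ?_, rfl⟩
    exact TopologicalSpace.isOpen_generateFrom_of_mem (Or.inl ⟨U0, hU0open, hU0ne, rfl⟩)
  have hF𝒰 : F ∈ 𝒰 := fun x hx => mem_iUnion₂.mpr ⟨x, hx, hVmem x⟩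
  refine ⟨𝒰, h𝒰open.mem_nhds hF𝒰, ?_⟩
  rintro B hBmem C hCU hCB hCne hCneB hclopen
  obtain ⟨s, hBs⟩ := hBmem
  have hNE : Nonempty (Fin n) := ⟨⟨0, hn⟩⟩
  have hmk : ∀ x : Fin n → X, (Set.range x).Nonempty ∧ (Set.range x).Finite ∧
      (Set.range x).ncard ≤ n := by
    intro x
    refine ⟨Set.range_nonempty x, Set.finite_range x, ?_⟩
    rw [← Set.image_univ]
    calc (x '' univ).ncard ≤ (univ : Set (Fin n)).ncard := Set.ncard_image_le Set.finite_univ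
      _ = n := by rw [Set.ncard_univ, Nat.card_eq_fintype_card, Fintype.card_fin]
  set mk : (Fin n → X) → HypFn n X := fun x => ⟨Set.range x, hmk x⟩ with hmkdef
  obtain ⟨E, hEC⟩ := hCne
  obtain ⟨a, haA, haE⟩ : ∃ x : Fin n → X, (∀ i, x i ∈ A (s i)) ∧ E.val = Set.range x := by
    have := hCB hEC; rwa [hBs] at this
  obtain ⟨G, hGB, hGC⟩ := Set.exists_of_ssubset (hCB.ssubset_of_ne hCneB)
  obtain ⟨b, hbA, hbG⟩ : ∃ x : Fin n → X, (∀ i, x i ∈ A (s i)) ∧ G.val = Set.range x := by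
    rwa [hBs] at hGB
  have key : ∀ m : ℕ, m ≤ n → mk (fun i => if (i : ℕ) < m then b i else a i) ∈ C := by
    intro m
    induction m with
    | zero =>
      intro _
      have hz0 : (fun i : Fin n => if (i : ℕ) < 0 then b i else a i) = a := by
        funext i; simp
      rw [hz0]
      have : mk a = E := Subtype.ext haE.symm
      rwa [this]
    | succ m ih =>
      intro hm1
      have hm : m < n := hm1
      have hz := ih hm.le
      set idx : Fin n := ⟨m, hm⟩ with hidx
      set z : Fin n → X := fun i => if (i : ℕ) < m then b i else a i with hzdef
      have hzA : ∀ i, z i ∈ A (s i) := by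
        intro i; rw [hzdef]; dsimp only; split_ifs
        exacts [hbA i, haA i]
      have hupdA : ∀ t : X, t ∈ A (s idx) → ∀ i, Function.update z idx t i ∈ A (s i) := by
        intro t ht i
        rcases eq_or_ne i idx with rfl | hine
        · rwa [Function.update_self]
        · rw [Function.update_of_ne hine]; exact hzA i
      have hmemB : ∀ t : ↥(A (s idx)), mk (Function.update z idx t.val) ∈ B := by
        intro t; rw [hBs]
        exact ⟨Function.update z idx t.val, hupdA t.val t.2, rfl⟩
      set ψ : ↥(A (s idx)) → ↥B := fun t => ⟨mk (Function.update z idx t.val), hmemB t⟩ with hψdef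
      have hψcont : Continuous ψ := by
        rw [hψdef]
        apply Continuous.subtype_mk
        exact (continuous_induced_rng (t₂ := VietorisTop _)).mpr
          (vietoris_update_continuous' z idx continuous_subtype_val)
      set Eset : Set ↥(A (s idx)) := ψ ⁻¹' {y : ↥B | (y : HypFn n X) ∈ C} with hEsetdef
      have hEclopen : IsClopen Eset := hclopen.preimage hψcont
      have hz_in : (⟨z idx, hzA idx⟩ : ↥(A (s idx))) ∈ Eset := by
        show mk (Function.update z idx (z idx)) ∈ C
        rwa [Function.update_eq_self]
      have hsubU0 : ∀ t : ↥(A (s idx)), t ∈ Eset → (t : X) ∈ U0 := by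
        intro t ht
        have h1 : mk (Function.update z idx t.val) ∈ C := ht
        have h3 : Set.range (Function.update z idx t.val) ⊆ U0 := hCU h1
        have h4 := h3 ⟨idx, rfl⟩
        rwa [Function.update_self] at h4
      have ha'U0 := hsubU0 _ hz_in
      rw [hU0] at ha'U0
      obtain ⟨p, hpF, hpV⟩ := mem_iUnion₂.mp ha'U0
      set Ep : Set ↥(A (s idx)) := Eset ∩ (Subtype.val ⁻¹' V p) with hEpdef
      have hEpne : Ep.Nonempty := ⟨⟨z idx, hzA idx⟩, hz_in, hpV⟩
      have hEpopen : IsOpen Ep := hEclopen.isOpen.inter ((hVopen p).preimage continuous_subtype_val)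
      have hEpclosed : IsClosed Ep := by
        have heq : Ep = Eset ∩ (Subtype.val ⁻¹' V' p) := by
          apply Subset.antisymm
          · rintro t ⟨ht, htV⟩
            exact ⟨ht, hVV' p htV⟩
          · rintro t ⟨ht, htB⟩
            refine ⟨ht, ?_⟩
            have h5 := hsubU0 t ht
            rw [hU0] at h5
            obtain ⟨q, hqF, hqV⟩ := mem_iUnion₂.mp h5
            rcases eq_or_ne q p with rfl | hqp
            · exact hqV
            · exfalso
              have := hV'disj q hqF p hpF hqp
              rw [eq_empty_iff_forall_notMem] at this
              exact this t.val ⟨hVV' q hqV, htB⟩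
        rw [heq]
        exact hEclopen.isClosed.inter ((hV'closed p).preimage continuous_subtype_val)
      have hEpuniv : Ep = univ := by
        by_contra hneu
        have hC'W : Subtype.val '' Ep ⊆ W p := by
          rintro x ⟨t, ht, rfl⟩
          exact hVW p ht.2
        have hC'A : Subtype.val '' Ep ⊆ A (s idx) := by
          rintro x ⟨t, -, rfl⟩; exact t.2
        have hC'ne : (Subtype.val '' Ep).Nonempty := hEpne.image _
        have hC'neq : Subtype.val '' Ep ≠ A (s idx) := by
          intro h
          apply hneu
          ext t
          simp only [mem_univ, iff_true]
          have ht : t.val ∈ Subtype.val '' Ep := by rw [h]; exact t.2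
          obtain ⟨u, hu, huv⟩ := ht
          rwa [← Subtype.ext huv]
        refine hWcoh p (A (s idx)) ⟨s idx, rfl⟩ (Subtype.val '' Ep) hC'W hC'A hC'ne hC'neq ?_
        have hset : {y : ↥(A (s idx)) | (y : X) ∈ Subtype.val '' Ep} = Ep := by
          ext y
          simp only [mem_setOf_eq]
          constructor
          · rintro ⟨u, hu, huv⟩; rwa [← Subtype.ext huv]
          · intro hy; exact ⟨y, hy, rfl⟩
        rw [hset]
        exact ⟨hEpclosed, hEpopen⟩
      have hb_in : (⟨b idx, hbA idx⟩ : ↥(A (s idx))) ∈ Eset := by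
        have hmem : (⟨b idx, hbA idx⟩ : ↥(A (s idx))) ∈ Ep := hEpuniv ▸ mem_univ _
        exact hmem.1
      have hfinal : mk (Function.update z idx (b idx)) ∈ C := hb_in
      have harg : Function.update z idx (b idx) =
          fun i : Fin n => if (i : ℕ) < m + 1 then b i else a i := by
        funext i
        rcases eq_or_ne i idx with rfl | hine
        · rw [Function.update_self]
          have : ((idx : Fin n) : ℕ) = m := by rw [hidx]
          simp [this]
        · rw [Function.update_of_ne hine, hzdef]
          have hne' : (i : ℕ) ≠ m := by
            intro h; exact hine (Fin.ext (by rw [h, hidx]))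
          dsimp only
          rcases lt_or_ge (i : ℕ) m with hlt | hge
          · rw [if_pos hlt, if_pos (Nat.lt_succ_of_lt hlt)]
          · rw [if_neg (not_lt.mpr hge), if_neg (by omega)]
      rwa [harg] at hfinal
  have hkey := key n le_rfl
  have hb_eq : (fun i : Fin n => if (i : ℕ) < n then b i else a i) = b := by
    funext i; rw [if_pos i.isLt]
  rw [hb_eq] at hkey
  have hGmk : mk b = G := Subtype.ext hbG.symm
  rw [hGmk] at hkey
  exact hGC hkey
end
end

section
/- If a separable metrizable space X has a separable metrizable one-point connectification, then for every n ≥ 1 each of the hyperspaces K(X), F_n(X) and F(X), with the Vietoris topology, has a separable metrizable one-point connectification. -/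
open Set Topology

noncomputable section

/-- `X` has a separable metrizable one-point connectification: a connected separable
metrizable space containing `X` as a subspace whose remainder is a single point. -/
def HasSepMetrOnePointConnectification (X : Type*) [TopologicalSpace X] : Prop :=
  ∃ (Y : Type) (_ : TopologicalSpace Y), TopologicalSpace.MetrizableSpace Y ∧
    TopologicalSpace.SeparableSpace Y ∧ ConnectedSpace Y ∧
    ∃ f : X → Y, Topology.IsEmbedding f ∧ ∃ p : Y, (Set.range f)ᶜ = {p}

/-! Write `X = Y \ {p}` for the given connectification `Y`. The connectification of a hyperspace
of `X` is the set of its images in `K(Y)` together with the point `{p}`, a subspace of the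
separable metrizable space `K(Y)`. For connectedness, `Xⁿ ∪ {(p, …, p)}` is connected in `Yⁿ`:
since `Y` is connected, a relatively clopen set containing a point of `Xⁿ` contains points with
any one coordinate moved arbitrarily close to `p`, and moving the coordinates one at a time
brings it into every neighbourhood of `(p, …, p)`. Its image under `x ↦ {x₁, …, xₙ}` is the
`F_n` part; the `F` part is the union of these, and the `K` part lies in the closure of the
`F` part. -/

open Set Topology TopologicalSpace Function

attribute [local instance] TopologicalSpace.vietoris

theorem mem_closure_of_compl_singleton_subset_union {Z : Type*} [TopologicalSpace Z]
    [PreconnectedSpace Z] {p : Z} {A B : Set Z} (hA : IsOpen A) (hB : IsOpen B)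
    (hAB : Disjoint A B) (hcover : {p}ᶜ ⊆ A ∪ B) (hne : A.Nonempty) : p ∈ closure A := by
  by_contra hp
  have hclosed : IsClosed A := by
    refine closure_subset_iff_isClosed.mp fun y hy => ?_
    have hyp : y ≠ p := by rintro rfl; exact hp hy
    exact (hcover hyp).resolve_right fun hyB => (hAB.closure_left hB).ne_of_mem hy hyB rfl
  rcases isClopen_iff.mp ⟨hclosed, hA⟩ with hA' | hA'
  · exact hne.ne_empty hA'
  · exact hp (subset_closure (hA' ▸ mem_univ p))

section PiCompl

variable {ι : Type*} {Y : ι → Type*} [∀ i, TopologicalSpace (Y i)]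
  [∀ i, PreconnectedSpace (Y i)] [∀ i, T1Space (Y i)] {p : ∀ i, Y i}

theorem exists_update_mem_of_univ_pi_compl_subset_union [DecidableEq ι]
    {u v : Set (∀ i, Y i)} (hu : IsOpen u) (hv : IsOpen v)
    (hcover : univ.pi (fun i => {p i}ᶜ) ⊆ u ∪ v) (hdisj : univ.pi (fun i => {p i}ᶜ) ∩ (u ∩ v) = ∅)
    {w : ∀ i, Y i} (hw : w ∈ univ.pi fun i => {p i}ᶜ) (hwu : w ∈ u) (i : ι) {V : Set (Y i)}
    (hV : V ∈ 𝓝 (p i)) : ∃ y ∈ V, y ≠ p i ∧ update w i y ∈ u := by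
  have hupdate : Continuous (update w i) := continuous_const.update i continuous_id
  have hmem : ∀ y, y ≠ p i → update w i y ∈ univ.pi fun i => {p i}ᶜ := fun y hy =>
    (update_mem_pi_iff_of_mem hw).mpr fun _ => hy
  have hclosure : p i ∈ closure ({y | update w i y ∈ u} ∩ {p i}ᶜ) := by
    refine mem_closure_of_compl_singleton_subset_union (B := {y | update w i y ∈ v} ∩ {p i}ᶜ)
      ((hu.preimage hupdate).inter isOpen_compl_singleton)
      ((hv.preimage hupdate).inter isOpen_compl_singleton) ?_ ?_ ⟨w i, ?_, hw i (mem_univ i)⟩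
    · refine disjoint_left.mpr fun y ⟨hyu, hy⟩ ⟨hyv, _⟩ => ?_
      exact (eq_empty_iff_forall_notMem.mp hdisj) _ ⟨hmem y hy, hyu, hyv⟩
    · exact fun y hy => (hcover (hmem y hy)).imp (fun h => ⟨h, hy⟩) fun h => ⟨h, hy⟩
    · simpa using hwu
  obtain ⟨y, hyV, hyu, hy⟩ := mem_closure_iff_nhds.mp hclosure V hV
  exact ⟨y, hyV, hy, hyu⟩

theorem isPreconnected_insert_univ_pi_compl_singleton (p : ∀ i, Y i) :
    IsPreconnected (insert p (univ.pi fun i => {p i}ᶜ)) := by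
  classical
  intro u v hu hv hcover hu_ne hv_ne
  by_contra hdisj
  rw [not_nonempty_iff_eq_empty] at hdisj
  wlog hpv : p ∈ v generalizing u v
  · refine this v u hv hu (by rwa [union_comm]) hv_ne hu_ne (by rwa [inter_comm v u]) ?_
    exact (hcover (mem_insert p _)).resolve_right hpv
  have hpu : p ∉ u := fun hpu => hdisj.subset ⟨mem_insert p _, hpu, hpv⟩
  obtain ⟨a, ha, hau⟩ := hu_ne
  have ha : a ∈ univ.pi fun i => {p i}ᶜ :=
    (mem_insert_iff.mp ha).resolve_left (by rintro rfl; exact hpu hau)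
  have hcover' : univ.pi (fun i => {p i}ᶜ) ⊆ u ∪ v := (subset_insert _ _).trans hcover
  have hdisj' : univ.pi (fun i => {p i}ᶜ) ∩ (u ∩ v) = ∅ :=
    subset_eq_empty (inter_subset_inter_left _ (subset_insert _ _)) hdisj
  obtain ⟨I, t, ht, hIt⟩ := Filter.mem_pi'.mp (nhds_pi (a := p) ▸ hv.mem_nhds hpv)
  have hmove : ∀ J : Finset ι, ∃ w ∈ univ.pi (fun i => {p i}ᶜ), w ∈ u ∧ ∀ j ∈ J, w j ∈ t j := by
    intro J
    induction J using Finset.induction_on with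
    | empty => exact ⟨a, ha, hau, by simp⟩
    | insert i J _ ih =>
      obtain ⟨w, hw, hwu, hwt⟩ := ih
      obtain ⟨y, hyt, hyp, hyu⟩ :=
        exists_update_mem_of_univ_pi_compl_subset_union hu hv hcover' hdisj' hw hwu i (ht i)
      refine ⟨update w i y, (update_mem_pi_iff_of_mem hw).mpr fun _ => hyp, hyu, ?_⟩
      intro j hj
      rcases eq_or_ne j i with rfl | hji
      · simpa using hyt
      · simpa [hji] using hwt j ((Finset.mem_insert.mp hj).resolve_left hji)
  obtain ⟨w, hw, hwu, hwt⟩ := hmove I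
  exact hdisj.subset ⟨subset_insert _ _ hw, hwu, hIt fun j hj => hwt j hj⟩

end PiCompl

theorem Set.Finite.exists_fin_range_eq {α : Type*} {s : Set α} {n : ℕ} (hs : s.Finite)
    (hne : s.Nonempty) (hn : s.ncard ≤ n) : ∃ v : Fin n → α, range v = s := by
  obtain ⟨m, g, hg, rfl⟩ := hs.fin_param
  rw [ncard_range_of_injective hg, Nat.card_fin] at hn
  have : Nonempty (Fin m) := range_nonempty_iff_nonempty.mp hne
  exact ⟨g ∘ invFun (Fin.castLE hn), (invFun_surjective (Fin.castLE_injective hn)).range_comp g⟩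

theorem range_image_univ_pi {α : Type*} (s : Set α) {n : ℕ} (hn : 1 ≤ n) :
    range '' univ.pi (fun _ : Fin n => s) =
      {G | (G.Nonempty ∧ G.Finite ∧ G.ncard ≤ n) ∧ G ⊆ s} := by
  ext G
  constructor
  · rintro ⟨v, hv, rfl⟩
    have : Nonempty (Fin n) := ⟨⟨0, hn⟩⟩
    refine ⟨⟨range_nonempty v, finite_range v, ?_⟩,
      range_subset_iff.mpr fun i => hv i (mem_univ i)⟩
    simpa using Finite.card_range_le v
  · rintro ⟨⟨hne, hfin, hcard⟩, hGs⟩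
    obtain ⟨v, rfl⟩ := hfin.exists_fin_range_eq hne hcard
    exact ⟨v, fun i _ => hGs (mem_range_self i), rfl⟩

section Vietoris

variable {Y : Type*} [TopologicalSpace Y] [PreconnectedSpace Y] [T1Space Y] (p : Y)

theorem isPreconnected_insert_singleton_setOf_ncard_le {n : ℕ} (hn : 1 ≤ n) :
    IsPreconnected
      (insert {p} {G : Set Y | (G.Nonempty ∧ G.Finite ∧ G.ncard ≤ n) ∧ G ⊆ {p}ᶜ}) := by
  have : Nonempty (Fin n) := ⟨⟨0, hn⟩⟩
  have := (isPreconnected_insert_univ_pi_compl_singleton fun _ : Fin n => p).image range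
    vietoris.continuous_range_of_finite.continuousOn
  rwa [image_insert_eq, range_const, range_image_univ_pi _ hn] at this

theorem isPreconnected_insert_singleton_setOf_finite :
    IsPreconnected (insert {p} {G : Set Y | (G.Nonempty ∧ G.Finite) ∧ G ⊆ {p}ᶜ}) := by
  have : insert {p} {G : Set Y | (G.Nonempty ∧ G.Finite) ∧ G ⊆ {p}ᶜ} =
      ⋃ n : ℕ, insert {p} {G : Set Y | (G.Nonempty ∧ G.Finite ∧ G.ncard ≤ n + 1) ∧ G ⊆ {p}ᶜ} := by
    ext G
    simp only [mem_insert_iff, mem_ofPred_eq, mem_iUnion]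
    refine ⟨?_, ?_⟩
    · rintro (rfl | ⟨⟨hne, hfin⟩, hG⟩)
      · exact ⟨0, Or.inl rfl⟩
      · exact ⟨G.ncard, Or.inr ⟨⟨hne, hfin, G.ncard.le_succ⟩, hG⟩⟩
    · rintro ⟨n, rfl | ⟨⟨hne, hfin, -⟩, hG⟩⟩
      · exact Or.inl rfl
      · exact Or.inr ⟨⟨hne, hfin⟩, hG⟩
  rw [this]
  exact isPreconnected_iUnion ⟨{p}, mem_iInter.mpr fun n => mem_insert _ _⟩
    fun n => isPreconnected_insert_singleton_setOf_ncard_le p n.succ_pos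

theorem isPreconnected_insert_singleton_setOf_isCompact :
    IsPreconnected (insert {p} {G : Set Y | (G.Nonempty ∧ IsCompact G) ∧ G ⊆ {p}ᶜ}) := by
  refine (isPreconnected_insert_singleton_setOf_finite p).subset_closure ?_ ?_
  · exact insert_subset_insert fun G ⟨⟨hne, hfin⟩, hG⟩ => ⟨⟨hne, hfin.isCompact⟩, hG⟩
  · refine insert_subset_iff.mpr ⟨subset_closure (mem_insert _ _), ?_⟩
    rintro K ⟨⟨hne, -⟩, hK⟩
    -- `{∅}` is clopen, so the finite subsets approximating `K` may be taken nonempty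
    have hKmem : K ∈ {∅}ᶜ ∩ closure {t : Set Y | t.Finite ∧ t ⊆ K} := by
      rw [vietoris.closure_finite_subsets]
      exact ⟨hne.ne_empty, subset_closure⟩
    refine closure_mono ?_ (vietoris.isClopen_singleton_empty.compl.isOpen.inter_closure hKmem)
    rintro t ⟨ht, hfin, htK⟩
    exact mem_insert_of_mem _ ⟨⟨nonempty_iff_ne_empty.mpr ht, hfin⟩, htK.trans hK⟩

end Vietoris

theorem image_image_setOf_of_iff {X Y : Type*} {f : X → Y} {P : Set X → Prop}
    {R : Set Y → Prop} (hPR : ∀ F, P F ↔ R (f '' F)) :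
    (f '' ·) '' {F | P F} = {G | R G ∧ G ⊆ range f} := by
  ext G
  refine ⟨?_, fun ⟨hG, hGf⟩ => ⟨f ⁻¹' G, ?_, image_preimage_eq_of_subset hGf⟩⟩
  · rintro ⟨F, hF, rfl⟩
    exact ⟨(hPR F).mp hF, image_subset_range f F⟩
  · rwa [mem_ofPred_eq, hPR, image_preimage_eq_of_subset hGf]

/-- `VietorisTop` lacks Mathlib's generators for `U = ∅`, which only separate `∅`. -/
theorem induced_vietorisTop_eq {X : Type*} [τ : TopologicalSpace X] {P : Set X → Prop}
    (hP : ∀ F, P F → F.Nonempty) :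
    (VietorisTop τ).induced (Subtype.val : {F // P F} → Set X) =
      (TopologicalSpace.vietoris X).induced Subtype.val := by
  refine le_antisymm ?_
    (induced_mono (show TopologicalSpace.vietoris X ≤ VietorisTop τ from le_generateFrom ?_))
  · rw [TopologicalSpace.vietoris, induced_generateFrom_eq]
    refine le_generateFrom ?_
    rintro _ ⟨_, ⟨U, hU, rfl⟩ | ⟨U, hU, rfl⟩, rfl⟩ <;> rcases U.eq_empty_or_nonempty with rfl | hne
    · convert @isOpen_empty _ ((VietorisTop τ).induced Subtype.val)
      exact eq_empty_of_forall_notMem fun F hF => (hP _ F.2).ne_empty (subset_empty_iff.mp hF)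
    · exact isOpen_induced (t := VietorisTop τ) (.basic _ (.inl ⟨U, hU, hne, rfl⟩))
    · convert @isOpen_empty _ ((VietorisTop τ).induced Subtype.val)
      simp
    · exact isOpen_induced (t := VietorisTop τ) (.basic _ (.inr ⟨U, hU, hne, rfl⟩))
  · rintro _ (⟨U, hU, -, rfl⟩ | ⟨U, hU, -, rfl⟩)
    · exact hU.powerset_vietoris
    · exact vietoris.isOpen_inter_nonempty_of_isOpen hU

theorem HasSepMetrOnePointConnectification.of_isEmbedding {W : Type*} [TopologicalSpace W]
    {Z : Type} [TopologicalSpace Z] [MetrizableSpace Z] [SecondCountableTopology Z]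
    {e : W → Z} (he : IsEmbedding e) {q : Z} (hq : q ∉ range e)
    (hconn : IsPreconnected (insert q (range e))) : HasSepMetrOnePointConnectification W := by
  have : ConnectedSpace (insert q (range e) : Set Z) :=
    Subtype.connectedSpace ⟨insert_nonempty _ _, hconn⟩
  refine ⟨(insert q (range e) : Set Z), inferInstance, inferInstance, inferInstance, inferInstance,
    codRestrict e _ fun w => mem_insert_of_mem _ (mem_range_self w), he.codRestrict _ _,
    ⟨q, mem_insert _ _⟩, ?_⟩
  ext ⟨z, hz⟩
  simp only [mem_compl_iff, mem_range, mem_singleton_iff, Subtype.ext_iff, val_codRestrict_apply]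
  rcases hz with rfl | ⟨w, rfl⟩
  · exact iff_of_true (fun ⟨w, hw⟩ => hq ⟨w, hw⟩) rfl
  · exact iff_of_false (not_not.mpr ⟨w, rfl⟩) fun h => hq ⟨w, h⟩

theorem hasSepMetrOnePointConnectification_hyperspace {X : Type*} [τ : TopologicalSpace X]
    {P : Set X → Prop} (hP : ∀ F, P F → F.Nonempty ∧ IsCompact F) {Y : Type}
    [TopologicalSpace Y] [MetrizableSpace Y] [SeparableSpace Y] {f : X → Y} (hf : IsEmbedding f)
    {p : Y} (hp : p ∉ range f) (hconn : IsPreconnected (insert {p} ((f '' ·) '' {F | P F}))) :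
    @HasSepMetrOnePointConnectification {F // P F} ((VietorisTop τ).induced Subtype.val) := by
  let := metrizableSpaceMetric Y
  have := UniformSpace.secondCountable_of_separable Y
  have := metrizableSpace_of_t3_secondCountable (NonemptyCompacts Y)
  let : TopologicalSpace {F // P F} := (VietorisTop τ).induced Subtype.val
  let e : {F // P F} → NonemptyCompacts Y := fun F =>
    ⟨⟨f '' F.1, (hP _ F.2).2.image hf.continuous⟩, (hP _ F.2).1.image f⟩
  have he_coe : ((↑) : NonemptyCompacts Y → Set Y) ∘ e = (f '' ·) ∘ Subtype.val := rfl
  have hval : IsEmbedding (Subtype.val : {F // P F} → Set X) :=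
    ⟨⟨induced_vietorisTop_eq fun F hF => (hP F hF).1⟩, Subtype.val_injective⟩
  refine HasSepMetrOnePointConnectification.of_isEmbedding (e := e) (q := {p}) ?_ ?_ ?_
  · rw [← NonemptyCompacts.isEmbedding_coe.of_comp_iff, he_coe]
    exact hf.image_vietoris.comp hval
  · rintro ⟨F, hF⟩
    have hpF : f '' F.1 = {p} := congrArg ((↑) : NonemptyCompacts Y → Set Y) hF
    obtain ⟨x, -, hx⟩ : p ∈ f '' F.1 := hpF ▸ mem_singleton p
    exact hp ⟨x, hx⟩
  · rw [← NonemptyCompacts.isEmbedding_coe.isInducing.isPreconnected_image, image_insert_eq,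
      ← range_comp, he_coe, range_comp, Subtype.range_coe_subtype]
    exact hconn

theorem hyperspaces_onePointConnectification_general {X : Type*} [TopologicalSpace X]
    (h : HasSepMetrOnePointConnectification X) :
    HasSepMetrOnePointConnectification (HypK X) ∧
    (∀ n : ℕ, 1 ≤ n → HasSepMetrOnePointConnectification (HypFn n X)) ∧
    HasSepMetrOnePointConnectification (HypFin X) := by
  obtain ⟨Y, _, _, _, _, f, hf, p, hp⟩ := h
  have hrange : range f = {p}ᶜ := by rw [← hp, compl_compl]
  have hpf : p ∉ range f := by simp [hrange]
  refine ⟨?_, fun n hn => ?_, ?_⟩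
  · refine hasSepMetrOnePointConnectification_hyperspace (fun F hF => hF) hf hpf ?_
    rw [image_image_setOf_of_iff (R := fun G => G.Nonempty ∧ IsCompact G)
      fun F => by rw [image_nonempty, ← hf.isCompact_iff], hrange]
    exact isPreconnected_insert_singleton_setOf_isCompact p
  · refine hasSepMetrOnePointConnectification_hyperspace
      (fun F hF => ⟨hF.1, hF.2.1.isCompact⟩) hf hpf ?_
    rw [image_image_setOf_of_iff (R := fun G => G.Nonempty ∧ G.Finite ∧ G.ncard ≤ n)
      fun F => by rw [image_nonempty, finite_image_iff hf.injective.injOn,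
        ncard_image_of_injective F hf.injective], hrange]
    exact isPreconnected_insert_singleton_setOf_ncard_le p hn
  · refine hasSepMetrOnePointConnectification_hyperspace
      (fun F hF => ⟨hF.1, hF.2.isCompact⟩) hf hpf ?_
    rw [image_image_setOf_of_iff (R := fun G => G.Nonempty ∧ G.Finite)
      fun F => by rw [image_nonempty, finite_image_iff hf.injective.injOn], hrange]
    exact isPreconnected_insert_singleton_setOf_finite p

/-- If a separable metrizable space `X` has a separable metrizable one-point
connectification, then so do `K(X)`, `F_n(X)` (for every `n ≥ 1`) and `F(X)`. -/
theorem hyperspaces_onePointConnectification {X : Type*} [TopologicalSpace X]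
    [TopologicalSpace.MetrizableSpace X] [TopologicalSpace.SeparableSpace X]
    (h : HasSepMetrOnePointConnectification X) :
    HasSepMetrOnePointConnectification (HypK X) ∧
    (∀ n : ℕ, 1 ≤ n → HasSepMetrOnePointConnectification (HypFn n X)) ∧
    HasSepMetrOnePointConnectification (HypFin X) :=
  hyperspaces_onePointConnectification_general h
end
end

section
/- If X is a separable metrizable space that is cohesive and almost zero-dimensional, then for every n ≥ 1 the hyperspaces F_n(X), F(X) and K(X), with the Vietoris topology, are cohesive and almost zero-dimensional. -/
open Set Topology

noncomputable section

/-!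
Almost zero-dimensionality is checked on the Vietoris subbasis: if `V` is an intersection of
clopen sets, then so is `{G | G ⊆ V}`, and, because the members of the hyperspace are compact,
so is `{G | G ∩ V ≠ ∅}`.

For cohesion, assume `X` has two points; then cohesive neighbourhoods contain no nonempty clopen
set at all. Gluing finitely many of them along clopen sets (which exist near a compact set by
almost zero-dimensionality) gives, around any compact `F`, an open `W` containing no nonempty
clopen set. If a clopen set `𝒞` of the hyperspace lies in `{G | G ⊆ W}` and `G ∈ 𝒞`, moving one
point `x` of `G` through `X` is continuous in the Vietoris topology, so it pulls `𝒞` back to a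
nonempty clopen subset of `W`: impossible.
-/

section ClopenIntersections

variable {X : Type*} [TopologicalSpace X]

def IsIntersectionOfClopens (V : Set X) : Prop :=
  ∃ C : Set (Set X), (∀ c ∈ C, IsClopen c) ∧ V = ⋂₀ C

theorem isAZD_iff :
    IsAZD X ↔ ∀ x : X, ∀ U ∈ 𝓝 x, ∃ V ∈ 𝓝 x, V ⊆ U ∧ IsIntersectionOfClopens V :=
  Iff.rfl

theorem isIntersectionOfClopens_iff {V : Set X} :
    IsIntersectionOfClopens V ↔ ∀ x ∉ V, ∃ c, IsClopen c ∧ V ⊆ c ∧ x ∉ c := by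
  constructor
  · rintro ⟨C, hC, rfl⟩ x hx
    obtain ⟨c, hc, hxc⟩ := not_forall₂.1 hx
    exact ⟨c, hC c hc, sInter_subset_of_mem hc, hxc⟩
  · intro h
    refine ⟨{c | IsClopen c ∧ V ⊆ c}, fun c hc => hc.1, ?_⟩
    refine (subset_sInter fun c hc => hc.2).antisymm fun x hx => ?_
    by_contra hxV
    obtain ⟨c, hc, hVc, hxc⟩ := h x hxV
    exact hxc (hx c ⟨hc, hVc⟩)

namespace IsIntersectionOfClopens

theorem iInter {ι : Sort*} {V : ι → Set X} (h : ∀ i, IsIntersectionOfClopens (V i)) :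
    IsIntersectionOfClopens (⋂ i, V i) := by
  refine isIntersectionOfClopens_iff.2 fun x hx => ?_
  obtain ⟨i, hi⟩ := not_forall.1 (mem_iInter.not.1 hx)
  obtain ⟨c, hc, hVc, hxc⟩ := isIntersectionOfClopens_iff.1 (h i) x hi
  exact ⟨c, hc, (iInter_subset V i).trans hVc, hxc⟩

theorem union {A B : Set X} (hA : IsIntersectionOfClopens A) (hB : IsIntersectionOfClopens B) :
    IsIntersectionOfClopens (A ∪ B) := by
  refine isIntersectionOfClopens_iff.2 fun x hx => ?_
  obtain ⟨c, hc, hAc, hxc⟩ := isIntersectionOfClopens_iff.1 hA x fun h => hx (Or.inl h)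
  obtain ⟨d, hd, hBd, hxd⟩ := isIntersectionOfClopens_iff.1 hB x fun h => hx (Or.inr h)
  exact ⟨c ∪ d, hc.union hd, union_subset_union hAc hBd, fun h => h.elim hxc hxd⟩

theorem exists_isClopen_superset_disjoint {V K : Set X} (hV : IsIntersectionOfClopens V)
    (hK : IsCompact K) (hKV : Disjoint K V) : ∃ c, IsClopen c ∧ V ⊆ c ∧ Disjoint K c := by
  obtain ⟨C, hC, rfl⟩ := hV
  obtain ⟨u, hu⟩ := hK.elim_finite_subfamily_closed (fun c : C => (c : Set X))
    (fun c => (hC c c.2).isClosed) (by rwa [← sInter_eq_iInter, ← disjoint_iff_inter_eq_empty])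
  exact ⟨⋂ c ∈ u, (c : Set X), isClopen_biInter_finset fun c _ => hC c c.2,
    subset_iInter₂ fun c _ => sInter_subset_of_mem c.2, disjoint_iff_inter_eq_empty.2 hu⟩

end IsIntersectionOfClopens

theorem IsCompact.exists_isIntersectionOfClopens (hazd : IsAZD X) {K U : Set X}
    (hK : IsCompact K) (hU : IsOpen U) (hKU : K ⊆ U) :
    ∃ V, IsIntersectionOfClopens V ∧ K ⊆ interior V ∧ V ⊆ U := by
  refine hK.induction_on
    (p := fun S => ∃ V, IsIntersectionOfClopens V ∧ S ⊆ interior V ∧ V ⊆ U) ?_ ?_ ?_ ?_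
  · exact ⟨∅, ⟨{∅}, by simp [isClopen_empty], by simp⟩, empty_subset _, empty_subset _⟩
  · rintro S T hST ⟨V, hV, hTV, hVU⟩
    exact ⟨V, hV, hST.trans hTV, hVU⟩
  · rintro S T ⟨V, hV, hSV, hVU⟩ ⟨W, hW, hTW, hWU⟩
    exact ⟨V ∪ W, hV.union hW, union_subset (hSV.trans (interior_mono subset_union_left))
      (hTW.trans (interior_mono subset_union_right)), union_subset hVU hWU⟩
  · intro x hx
    obtain ⟨V, hV, hVU, hVC⟩ := isAZD_iff.1 hazd x U (hU.mem_nhds (hKU hx))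
    exact ⟨interior V, mem_nhdsWithin_of_mem_nhds (interior_mem_nhds.2 hV), V, hVC, subset_rfl,
      hVU⟩

theorem isAZD_of_subbasis {g : Set (Set X)} (hg : ‹TopologicalSpace X› = .generateFrom g)
    (h : ∀ s ∈ g, ∀ x ∈ s, ∃ V ∈ 𝓝 x, V ⊆ s ∧ IsIntersectionOfClopens V) : IsAZD X := by
  intro x U hU
  obtain ⟨_, ⟨f, ⟨hf, hfg⟩, rfl⟩, hxf, hfU⟩ :=
    (TopologicalSpace.isTopologicalBasis_of_subbasis hg).mem_nhds_iff.1 hU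
  choose! V hVx hVs hV using fun s hs => h s (hfg hs) x (hxf s hs)
  exact ⟨⋂ s ∈ f, V s, (Filter.biInter_mem hf).2 hVx,
    (iInter₂_mono hVs).trans (sInter_eq_biInter ▸ hfU),
    IsIntersectionOfClopens.iInter fun s => IsIntersectionOfClopens.iInter fun hs => hV s hs⟩

theorem IsAZD.exists_isClopen_mem_notMem [T1Space X] (hazd : IsAZD X) {x y : X} (hxy : x ≠ y) :
    ∃ c, IsClopen c ∧ x ∈ c ∧ y ∉ c := by
  obtain ⟨V, hV, hVy, hVC⟩ := isAZD_iff.1 hazd x {y}ᶜ (compl_singleton_mem_nhds hxy)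
  obtain ⟨c, hc, hVc, hyc⟩ := isIntersectionOfClopens_iff.1 hVC y fun h => hVy h rfl
  exact ⟨c, hc, hVc (mem_of_mem_nhds hV), hyc⟩

end ClopenIntersections

section ClopenFree

variable {X : Type*} [TopologicalSpace X]

def IsClopenFree (W : Set X) : Prop :=
  ∀ C ⊆ W, IsClopen C → C = ∅

theorem IsClopenFree.inter_union_sdiff {W₁ W₂ c : Set X} (h₁ : IsClopenFree W₁)
    (h₂ : IsClopenFree W₂) (hc : IsClopen c) : IsClopenFree (W₁ ∩ c ∪ W₂ \ c) := by
  intro C hC hCcl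
  have hCc : C ∩ c = ∅ := h₁ _ (fun x ⟨hxC, hxc⟩ => (hC hxC).elim (·.1) fun h => absurd hxc h.2)
    (hCcl.inter hc)
  have hCc' : C \ c = ∅ := h₂ _ (fun x ⟨hxC, hxc⟩ => (hC hxC).elim (absurd ·.2 hxc) (·.1))
    (hCcl.diff hc)
  rw [← Set.inter_union_sdiff C c, hCc, hCc', union_empty]

theorem IsCompact.exists_isClopenFree_superset (hazd : IsAZD X) {K : Set X} (hK : IsCompact K)
    (hO : ∀ x ∈ K, ∃ O, IsOpen O ∧ x ∈ O ∧ IsClopenFree O) :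
    ∃ W, IsOpen W ∧ K ⊆ W ∧ IsClopenFree W := by
  suffices ∃ c, IsClopen c ∧ K ⊆ c ∧ ∃ W, IsOpen W ∧ IsClopenFree W ∧ K ∩ c ⊆ W by
    obtain ⟨c, -, hKc, W, hW, hWfree, hKW⟩ := this
    exact ⟨W, hW, fun x hx => hKW ⟨hx, hKc hx⟩, hWfree⟩
  refine hK.induction_on (p := fun S =>
    ∃ c, IsClopen c ∧ S ⊆ c ∧ ∃ W, IsOpen W ∧ IsClopenFree W ∧ K ∩ c ⊆ W) ?_ ?_ ?_ ?_
  · exact ⟨∅, isClopen_empty, subset_rfl, ∅, isOpen_empty, fun C hC _ => subset_empty_iff.1 hC,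
      inter_subset_right⟩
  · rintro S T hST ⟨c, hc, hTc, hW⟩
    exact ⟨c, hc, hST.trans hTc, hW⟩
  · rintro S T ⟨c, hc, hSc, W₁, hW₁, hW₁free, hKW₁⟩ ⟨d, hd, hTd, W₂, hW₂, hW₂free, hKW₂⟩
    refine ⟨c ∪ d, hc.union hd, union_subset_union hSc hTd, W₁ ∩ c ∪ W₂ \ c,
      (hW₁.inter hc.isOpen).union (hW₂.sdiff hc.isClosed), hW₁free.inter_union_sdiff hW₂free hc,
      fun x ⟨hxK, hxcd⟩ => ?_⟩
    by_cases hxc : x ∈ c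
    · exact Or.inl ⟨hKW₁ ⟨hxK, hxc⟩, hxc⟩
    · exact Or.inr ⟨hKW₂ ⟨hxK, hxcd.resolve_left hxc⟩, hxc⟩
  · intro x hx
    obtain ⟨O, hO, hxO, hOfree⟩ := hO x hx
    obtain ⟨V, hV, hVO, hVC⟩ := isAZD_iff.1 hazd x O (hO.mem_nhds hxO)
    -- a clopen superset of `V` missing the compact set `K \ O` cuts `K` down into `O`
    obtain ⟨c, hc, hVc, hKc⟩ :=
      hVC.exists_isClopen_superset_disjoint (hK.diff hO) (disjoint_sdiff_left.mono_right hVO)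
    refine ⟨c, mem_nhdsWithin_of_mem_nhds (Filter.mem_of_superset hV hVc), c, hc, subset_rfl, O, hO,
      hOfree, fun y ⟨hyK, hyc⟩ => ?_⟩
    by_contra hyO
    exact hKc.notMem_of_mem_left ⟨hyK, hyO⟩ hyc

namespace Cohesive

theorem of_subsingleton [Subsingleton X] : Cohesive X := fun _ =>
  ⟨univ, Filter.univ_mem, fun _ hA _ _ _ hC hCA _ =>
    hCA (hC.eq_univ.trans (mem_singleton_iff.1 hA).symm)⟩

theorem of_isClopenFree (h : ∀ x : X, ∃ U ∈ 𝓝 x, IsClopenFree U) : Cohesive X := by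
  intro x
  obtain ⟨U, hU, hUfree⟩ := h x
  refine ⟨U, hU, fun A hA C hCU _ hC _ hCcl => hC.ne_empty (hUfree C hCU ?_)⟩
  rw [mem_singleton_iff.1 hA] at hCcl
  exact (Homeomorph.Set.univ X).isQuotientMap.isClopen_preimage.1 hCcl

theorem exists_isClopenFree [T1Space X] [Nontrivial X] (hcoh : Cohesive X) (hazd : IsAZD X)
    (x : X) : ∃ O, IsOpen O ∧ x ∈ O ∧ IsClopenFree O := by
  obtain ⟨U, hU, hUcoh⟩ := hcoh x
  have hU_univ : ∀ C ⊆ U, IsClopen C → C.Nonempty → C = univ := fun C hCU hC hCne =>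
    by_contra fun hC_univ => hUcoh univ rfl C hCU (subset_univ C) hCne hC_univ
      (hC.preimage continuous_subtype_val)
  refine ⟨interior U, isOpen_interior, mem_interior_iff_mem_nhds.2 hU, fun C hCU hC => ?_⟩
  refine not_nonempty_iff_eq_empty.1 fun hCne => ?_
  -- a nonempty clopen subset of `U` is `univ`; but AZD gives a proper one once `X` has two points
  have hU_eq : U = univ := univ_subset_iff.1 <|
    (hU_univ C (hCU.trans interior_subset) hC hCne).symm.subset.trans (hCU.trans interior_subset)
  obtain ⟨y, z, hyz⟩ := exists_pair_ne X
  obtain ⟨c, hc, hyc, hzc⟩ := hazd.exists_isClopen_mem_notMem hyz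
  exact hzc ((hU_univ c (hU_eq ▸ subset_univ c) hc ⟨y, hyc⟩).symm ▸ mem_univ z)

end Cohesive

end ClopenFree

section Hyperspace

variable {X : Type*} [tX : TopologicalSpace X]

theorem continuous_insert_vietoris (A : Set X) :
    Continuous[tX, VietorisTop tX] (fun x => insert x A) := by
  refine continuous_generateFrom_iff.2 ?_
  rintro s (⟨U, hU, -, rfl⟩ | ⟨U, hU, -, rfl⟩)
  · simp only [preimage_ofPred_eq, insert_subset_iff]
    exact hU.and isOpen_const
  · simp only [preimage_ofPred_eq, Set.Nonempty, mem_inter_iff, mem_insert_iff, exists_eq_or_imp]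
    exact hU.union isOpen_const

def Hyperspace (P : Set X → Prop) : Type _ := {F : Set X // F.Nonempty ∧ P F}

instance (P : Set X → Prop) : TopologicalSpace (Hyperspace P) :=
  (VietorisTop tX).induced Subtype.val

namespace Hyperspace

variable {P : Set X → Prop}

theorem isOpen_setOf_subset {U : Set X} (hU : IsOpen U) :
    IsOpen {G : Hyperspace P | G.1 ⊆ U} := by
  rcases U.eq_empty_or_nonempty with rfl | hUne
  · convert isOpen_empty
    exact eq_empty_of_forall_notMem fun G hG => G.2.1.ne_empty (subset_empty_iff.1 hG)
  · exact ⟨_, TopologicalSpace.isOpen_generateFrom_of_mem (Or.inl ⟨U, hU, hUne, rfl⟩), rfl⟩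

theorem isOpen_setOf_inter_nonempty {U : Set X} (hU : IsOpen U) :
    IsOpen {G : Hyperspace P | (G.1 ∩ U).Nonempty} := by
  rcases U.eq_empty_or_nonempty with rfl | hUne
  · simp
  · exact ⟨_, TopologicalSpace.isOpen_generateFrom_of_mem (Or.inr ⟨U, hU, hUne, rfl⟩), rfl⟩

theorem isClopen_setOf_subset {C : Set X} (hC : IsClopen C) :
    IsClopen {G : Hyperspace P | G.1 ⊆ C} := by
  refine ⟨isOpen_compl_iff.1 ?_, isOpen_setOf_subset hC.isOpen⟩
  convert isOpen_setOf_inter_nonempty (P := P) hC.isClosed.isOpen_compl using 1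
  ext G
  simp [not_subset, Set.Nonempty]

theorem isClopen_setOf_inter_nonempty {C : Set X} (hC : IsClopen C) :
    IsClopen {G : Hyperspace P | (G.1 ∩ C).Nonempty} := by
  refine ⟨isOpen_compl_iff.1 ?_, isOpen_setOf_inter_nonempty hC.isOpen⟩
  convert isOpen_setOf_subset (P := P) hC.isClosed.isOpen_compl using 1
  ext G
  simp [subset_compl_iff_disjoint_right, not_nonempty_iff_eq_empty, disjoint_iff_inter_eq_empty]

theorem isIntersectionOfClopens_setOf_subset {V : Set X} (hV : IsIntersectionOfClopens V) :
    IsIntersectionOfClopens {G : Hyperspace P | G.1 ⊆ V} := by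
  refine isIntersectionOfClopens_iff.2 fun G hG => ?_
  obtain ⟨x, hxG, hxV⟩ := not_subset.1 hG
  obtain ⟨c, hc, hVc, hxc⟩ := isIntersectionOfClopens_iff.1 hV x hxV
  exact ⟨_, isClopen_setOf_subset hc, fun H hH => hH.trans hVc, fun hGc => hxc (hGc hxG)⟩

theorem isIntersectionOfClopens_setOf_inter_nonempty (hP : ∀ F, P F → IsCompact F) {V : Set X}
    (hV : IsIntersectionOfClopens V) :
    IsIntersectionOfClopens {G : Hyperspace P | (G.1 ∩ V).Nonempty} := by
  refine isIntersectionOfClopens_iff.2 fun G hG => ?_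
  obtain ⟨c, hc, hVc, hGc⟩ := hV.exists_isClopen_superset_disjoint (hP _ G.2.2)
    (disjoint_iff_inter_eq_empty.2 (not_nonempty_iff_eq_empty.1 hG))
  exact ⟨_, isClopen_setOf_inter_nonempty hc, fun H hH => hH.mono (inter_subset_inter_right _ hVc),
    fun h => not_disjoint_iff_nonempty_inter.2 h hGc⟩

theorem isAZD (hP : ∀ F, P F → IsCompact F) (hazd : IsAZD X) : IsAZD (Hyperspace P) := by
  refine isAZD_of_subbasis induced_generateFrom_eq ?_
  rintro _ ⟨_, ⟨U, hU, -, rfl⟩ | ⟨U, hU, -, rfl⟩, rfl⟩ G hG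
  · obtain ⟨V, hV, hGV, hVU⟩ := (hP _ G.2.2).exists_isIntersectionOfClopens hazd hU hG
    exact ⟨{H | H.1 ⊆ V},
      Filter.mem_of_superset ((isOpen_setOf_subset isOpen_interior).mem_nhds hGV)
        fun H hH => hH.trans interior_subset, fun H hH => hH.trans hVU,
      isIntersectionOfClopens_setOf_subset hV⟩
  · obtain ⟨x, hxG, hxU⟩ := hG
    obtain ⟨V, hV, hVU, hVC⟩ := isAZD_iff.1 hazd x U (hU.mem_nhds hxU)
    exact ⟨{H | (H.1 ∩ V).Nonempty}, Filter.mem_of_superset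
      ((isOpen_setOf_inter_nonempty isOpen_interior).mem_nhds
        ⟨x, hxG, mem_interior_iff_mem_nhds.2 hV⟩)
      fun H hH => hH.mono (inter_subset_inter_right _ interior_subset),
      fun H hH => hH.mono (inter_subset_inter_right _ hVU),
      isIntersectionOfClopens_setOf_inter_nonempty hP hVC⟩

theorem cohesive [T1Space X] (hP : ∀ F, P F → IsCompact F)
    (hins : ∀ F, F.Nonempty → P F → ∃ a A, insert a A = F ∧ ∀ x, P (insert x A))
    (hcoh : Cohesive X) (hazd : IsAZD X) : Cohesive (Hyperspace P) := by
  rcases subsingleton_or_nontrivial X with hX | hX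
  · have : Subsingleton (Hyperspace P) :=
      ⟨fun G H => Subtype.ext (G.2.1.eq_univ.trans H.2.1.eq_univ.symm)⟩
    exact Cohesive.of_subsingleton
  refine Cohesive.of_isClopenFree fun F => ?_
  obtain ⟨W, hW, hFW, hWfree⟩ := (hP _ F.2.2).exists_isClopenFree_superset hazd
    fun x _ => hcoh.exists_isClopenFree hazd x
  refine ⟨{G | G.1 ⊆ W}, (isOpen_setOf_subset hW).mem_nhds hFW, fun 𝒞 h𝒞W h𝒞 => ?_⟩
  refine eq_empty_of_forall_notMem fun G hG => ?_
  -- moving one point of `G` around traces out a clopen subset of `X` inside `W`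
  obtain ⟨a, A, haA, hA⟩ := hins G.1 G.2.1 G.2.2
  let φ : X → Hyperspace P := fun x => ⟨insert x A, insert_nonempty x A, hA x⟩
  have hφ : Continuous φ := continuous_induced_rng.2 (continuous_insert_vietoris A)
  have hD : φ ⁻¹' 𝒞 = ∅ :=
    hWfree _ (fun x hx => h𝒞W hx (mem_insert x A)) (h𝒞.preimage hφ)
  have haD : a ∈ φ ⁻¹' 𝒞 := show φ a ∈ 𝒞 from (Subtype.ext haA : φ a = G) ▸ hG
  exact hD.subset haD

end Hyperspace

end Hyperspace

theorem hyperspaces_cohesive_and_isAZD_general {X : Type*} [TopologicalSpace X]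
    [TopologicalSpace.MetrizableSpace X]
    (hcoh : Cohesive X) (hazd : IsAZD X) :
    (∀ n : ℕ, 1 ≤ n → Cohesive (HypFn n X) ∧ IsAZD (HypFn n X)) ∧
    (Cohesive (HypFin X) ∧ IsAZD (HypFin X)) ∧
    (Cohesive (HypK X) ∧ IsAZD (HypK X)) := by
  have insert_closed {P : Set X → Prop} (hP : ∀ F x, P F → P (insert x F)) (F : Set X)
      (hF : F.Nonempty) (hPF : P F) : ∃ a A, insert a A = F ∧ ∀ x, P (insert x A) :=
    ⟨hF.some, F, insert_eq_of_mem hF.some_mem, fun x => hP F x hPF⟩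
  have replace_point (n : ℕ) (F : Set X) (hF : F.Nonempty) (hPF : F.Finite ∧ F.ncard ≤ n) :
      ∃ a A, insert a A = F ∧ ∀ x, (insert x A).Finite ∧ (insert x A).ncard ≤ n :=
    ⟨hF.some, F \ {hF.some}, insert_sdiff_self_of_mem hF.some_mem, fun x =>
      ⟨hPF.1.sdiff.insert x, (ncard_insert_le x _).trans
        ((ncard_sdiff_singleton_add_one hF.some_mem hPF.1).trans_le hPF.2)⟩⟩
  refine ⟨fun n _ => ⟨?_, ?_⟩, ⟨?_, ?_⟩, ⟨?_, ?_⟩⟩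
  · exact Hyperspace.cohesive (fun F hF => hF.1.isCompact) (replace_point n) hcoh hazd
  · exact Hyperspace.isAZD (P := fun F => F.Finite ∧ F.ncard ≤ n) (fun F hF => hF.1.isCompact) hazd
  · exact Hyperspace.cohesive (fun F hF => hF.isCompact)
      (insert_closed fun F x hF => hF.insert x) hcoh hazd
  · exact Hyperspace.isAZD (P := Set.Finite) (fun F hF => hF.isCompact) hazd
  · exact Hyperspace.cohesive (fun F hF => hF) (insert_closed fun F x hF => hF.insert x) hcoh hazd
  · exact Hyperspace.isAZD (P := IsCompact) (fun F hF => hF) hazd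

/-- If `X` is a separable metrizable space that is cohesive and almost zero-dimensional,
then so are `F_n(X)` (for every `n ≥ 1`), `F(X)` and `K(X)`. -/
theorem hyperspaces_cohesive_and_isAZD {X : Type*} [TopologicalSpace X]
    [TopologicalSpace.MetrizableSpace X] [TopologicalSpace.SeparableSpace X]
    (hcoh : Cohesive X) (hazd : IsAZD X) :
    (∀ n : ℕ, 1 ≤ n → Cohesive (HypFn n X) ∧ IsAZD (HypFn n X)) ∧
    (Cohesive (HypFin X) ∧ IsAZD (HypFin X)) ∧
    (Cohesive (HypK X) ∧ IsAZD (HypK X)) :=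
  hyperspaces_cohesive_and_isAZD_general hcoh hazd
end
end

section
/- The hyperspace F(𝔈_c) of all nonempty finite subsets of complete Erdős space, with the Vietoris topology, is of the first category in itself (meager in itself), and consequently F(𝔈_c) is not homeomorphic to 𝔈_c. -/
open Set Topology

noncomputable section

/-!
The sets `F_n(X)` of nonempty subsets with at most `n` points exhaust `F(X)`. When `X` is
Hausdorff each `F_n(X)` is closed, since `n + 1` distinct points can be separated by disjoint open
sets; when every nonempty open subset of `X` is infinite its complement is dense, since a Vietoris
neighbourhood of `F` contains every finite `G ⊇ F` lying in a suitable open `V ⊇ F`. Hence `F(X)`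
is meagre in itself. Complete Erdős space qualifies (change one small coordinate to `1/m`,
`m` large), and it is a closed subset of `ℓ²`, hence a nonempty Baire space, which is never
meagre in itself.
-/

theorem Set.ncard_le_ncard_of_inter_nonempty {α : Type*} {s t : Set α} (U : α → Set α)
    (hU : s.PairwiseDisjoint U) (hst : ∀ x ∈ s, (t ∩ U x).Nonempty) (ht : t.Finite) :
    s.ncard ≤ t.ncard := by
  choose! f hf using hst
  refine Set.ncard_le_ncard_of_injOn f (fun x hx => (hf x hx).1) (fun x hx y hy hxy => ?_) ht
  by_contra hne
  exact Set.disjoint_left.mp (hU hx hy hne) (hf x hx).2 (hxy ▸ (hf y hy).2)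

namespace VietorisTop

variable {X : Type*} [τ : TopologicalSpace X]

theorem isOpen_setOf_inter_nonempty {U : Set X} (hU : IsOpen U) (hne : U.Nonempty) :
    IsOpen[VietorisTop τ] {F : Set X | (F ∩ U).Nonempty} :=
  TopologicalSpace.isOpen_generateFrom_of_mem (Or.inr ⟨U, hU, hne, rfl⟩)

theorem exists_isOpen_forall_mem_of_subset {O : Set (Set X)} (hO : IsOpen[VietorisTop τ] O)
    {F : Set X} (hF : F ∈ O) :
    ∃ V : Set X, IsOpen V ∧ F ⊆ V ∧ ∀ G : Set X, F ⊆ G → G ⊆ V → G ∈ O := by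
  induction hO generalizing F with
  | basic S hS =>
    rcases hS with ⟨U, hU, -, rfl⟩ | ⟨U, -, -, rfl⟩
    · exact ⟨U, hU, hF, fun G _ hGU => hGU⟩
    · exact ⟨univ, isOpen_univ, subset_univ F,
        fun G hFG _ => hF.mono (inter_subset_inter_left U hFG)⟩
  | univ => exact ⟨univ, isOpen_univ, subset_univ F, fun _ _ _ => trivial⟩
  | inter S T _ _ ihS ihT =>
    obtain ⟨V, hV, hFV, hVS⟩ := ihS hF.1
    obtain ⟨W, hW, hFW, hWT⟩ := ihT hF.2
    exact ⟨V ∩ W, hV.inter hW, subset_inter hFV hFW, fun G hFG hGVW =>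
      ⟨hVS G hFG (hGVW.trans inter_subset_left), hWT G hFG (hGVW.trans inter_subset_right)⟩⟩
  | sUnion 𝒮 _ ih =>
    obtain ⟨S, hS, hFS⟩ := hF
    obtain ⟨V, hV, hFV, hVS⟩ := ih S hS hFS
    exact ⟨V, hV, hFV, fun G hFG hGV => ⟨S, hS, hVS G hFG hGV⟩⟩

end VietorisTop

namespace HypFin

variable {X : Type*} [τ : TopologicalSpace X]

theorem isOpen_setOf_lt_ncard [T2Space X] (n : ℕ) : IsOpen {F : HypFin X | n < F.val.ncard} := by
  rw [isOpen_iff_forall_mem_open]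
  rintro F (hF : n < F.val.ncard)
  obtain ⟨t, htF, htcard⟩ := Set.exists_subset_card_eq hF
  have htfin : t.Finite := F.prop.2.subset htF
  obtain ⟨U, hU, hdisj⟩ := htfin.t2_separation
  set N : Set (Set X) := ⋂ x ∈ t, {G : Set X | (G ∩ U x).Nonempty}
  have hN : IsOpen[VietorisTop τ] N := by
    let := VietorisTop τ
    exact htfin.isOpen_biInter fun x _ =>
      VietorisTop.isOpen_setOf_inter_nonempty (hU x).2 ⟨x, (hU x).1⟩
  refine ⟨Subtype.val ⁻¹' N, fun G hG => ?_, isOpen_induced (t := VietorisTop τ) hN,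
    mem_iInter₂.mpr fun x hx => ⟨x, htF hx, (hU x).1⟩⟩
  have := Set.ncard_le_ncard_of_inter_nonempty U hdisj (mem_iInter₂.mp hG) G.prop.2
  show n < G.val.ncard
  omega

theorem dense_setOf_lt_ncard (hX : ∀ U : Set X, IsOpen U → U.Nonempty → U.Infinite) (n : ℕ) :
    Dense {F : HypFin X | n < F.val.ncard} := by
  refine dense_iff_inter_open.mpr fun O hO ⟨F, hFO⟩ => ?_
  obtain ⟨O', hO', rfl⟩ := (isOpen_induced_iff (t := VietorisTop τ)).mp hO
  obtain ⟨V, hV, hFV, hVO'⟩ := VietorisTop.exists_isOpen_forall_mem_of_subset hO' hFO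
  obtain ⟨s, hsV, hsfin, hscard⟩ :=
    (hX V hV (F.prop.1.mono hFV)).exists_subset_ncard_eq (n + 1)
  have hfin : (F.val ∪ s).Finite := F.prop.2.union hsfin
  refine ⟨⟨F.val ∪ s, F.prop.1.inl, hfin⟩,
    hVO' _ subset_union_left (union_subset hFV hsV), ?_⟩
  have := Set.ncard_le_ncard (subset_union_right (s := F.val)) hfin
  show n < (F.val ∪ s).ncard
  omega

theorem isMeagre_univ [T2Space X] (hX : ∀ U : Set X, IsOpen U → U.Nonempty → U.Infinite) :
    IsMeagre (univ : Set (HypFin X)) := by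
  have hempty : (⋂ n : ℕ, {F : HypFin X | n < F.val.ncard}) = ∅ :=
    iInter_eq_empty_iff.mpr fun F => ⟨F.val.ncard, lt_irrefl F.val.ncard⟩
  rw [IsMeagre, compl_univ, ← hempty]
  exact countable_iInter_mem.mpr fun n =>
    residual_of_dense_open (isOpen_setOf_lt_ncard n) (dense_setOf_lt_ncard hX n)

end HypFin

theorem lp.exists_norm_apply_lt {α : Type*} [Infinite α] {E : α → Type*}
    [∀ i, NormedAddCommGroup (E i)] {p : ENNReal} (hp : 0 < p.toReal) (x : lp E p) {ε : ℝ}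
    (hε : 0 < ε) : ∃ i, ‖x i‖ < ε := by
  have hsum := (lp.memℓp x).summable hp
  obtain ⟨i, hi⟩ := (hsum.tendsto_cofinite_zero.eventually
    (gt_mem_nhds (Real.rpow_pos_of_pos hε p.toReal))).exists
  exact ⟨i, (Real.rpow_lt_rpow_iff (norm_nonneg _) hε.le hp).mp hi⟩

namespace CompleteErdosSpace

def coordSet : Set ℝ := {t | t = 0 ∨ ∃ m : ℕ, 0 < m ∧ t = 1 / (m : ℝ)}

theorem coordSet_eq : coordSet = insert 0 (range fun k : ℕ => 1 / ((k : ℝ) + 1)) := by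
  ext t
  simp only [coordSet, mem_ofPred_eq, mem_insert_iff, mem_range]
  constructor
  · rintro (rfl | ⟨m, hm, rfl⟩)
    · exact Or.inl rfl
    · exact Or.inr ⟨m - 1, by rw [Nat.cast_sub hm]; push_cast; ring_nf⟩
  · rintro (rfl | ⟨k, rfl⟩)
    · exact Or.inl rfl
    · exact Or.inr ⟨k + 1, k.succ_pos, by push_cast; ring⟩

theorem isClosed_coordSet : IsClosed coordSet := by
  rw [coordSet_eq]
  exact (tendsto_one_div_add_atTop_nhds_zero_nat (𝕜 := ℝ)).isCompact_insert_range.isClosed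

theorem isClosed_setOf_forall_mem_coordSet :
    IsClosed {x : lp (fun _ : ℕ => ℝ) 2 | ∀ n, x n ∈ coordSet} := by
  simp only [ofPred_forall]
  exact isClosed_iInter fun n =>
    isClosed_coordSet.preimage (lp.lipschitzWith_one_eval 2 n).continuous

instance : T2Space CompleteErdosSpace := by unfold CompleteErdosSpace; infer_instance

instance : Nonempty CompleteErdosSpace := ⟨⟨0, fun _ => Or.inl rfl⟩⟩

instance : BaireSpace CompleteErdosSpace := by
  unfold CompleteErdosSpace
  have : CompleteSpace {x : lp (fun _ : ℕ => ℝ) 2 //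
      ∀ n, x.val n = 0 ∨ ∃ m : ℕ, 0 < m ∧ x.val n = 1 / (m : ℝ)} :=
    isClosed_setOf_forall_mem_coordSet.completeSpace_coe
  exact BaireSpace.of_completelyPseudoMetrizable

theorem exists_update (x : CompleteErdosSpace) (n : ℕ) {t : ℝ} (ht : t ∈ coordSet) :
    ∃ y : CompleteErdosSpace, y.val n = t ∧ dist y.val x.val = |t - x.val n| := by
  set y : lp (fun _ : ℕ => ℝ) 2 := x.val + lp.single 2 n (t - x.val n)
  have hy : ∀ k, y k = if k = n then t else x.val k := by
    intro k
    simp only [y, lp.coeFn_add, Pi.add_apply, lp.single_apply, Pi.single_apply]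
    split_ifs with hk
    · subst hk
      ring
    · ring
  refine ⟨⟨y, fun k => ?_⟩, by simp [hy], ?_⟩
  · rw [hy k]
    split_ifs
    · exact ht
    · exact x.prop k
  · rw [dist_eq_norm, show y - x.val = lp.single 2 n (t - x.val n) from add_sub_cancel_left _ _,
      lp.norm_single (by norm_num), Real.norm_eq_abs]

theorem infinite_of_isOpen {U : Set CompleteErdosSpace} (hU : IsOpen U) (hne : U.Nonempty) :
    U.Infinite := by
  obtain ⟨x, hx⟩ := hne
  obtain ⟨V, hV, rfl⟩ := isOpen_induced_iff.mp hU
  obtain ⟨ε, hε, hball⟩ := Metric.isOpen_iff.mp hV _ hx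
  obtain ⟨n, hn⟩ := lp.exists_norm_apply_lt (by norm_num) x.val (half_pos hε)
  obtain ⟨M, hM⟩ := exists_nat_one_div_lt (half_pos hε)
  choose y hyn hyx using fun m : ℕ =>
    exists_update x n (t := 1 / ((M + m + 1 : ℕ) : ℝ)) (Or.inr ⟨_, Nat.succ_pos _, rfl⟩)
  refine infinite_of_injective_forall_mem (f := y) (fun a b hab => ?_) fun m => hball ?_
  · have := hyn a
    rw [hab, hyn b] at this
    field_simp at this
    norm_cast at this
    omega
  · have hm : (1 : ℝ) / (M + m + 1 : ℕ) ≤ 1 / ((M : ℝ) + 1) := by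
      gcongr
      push_cast
      linarith
    rw [Real.norm_eq_abs] at hn
    rw [Metric.mem_ball, hyx]
    calc |1 / ((M + m + 1 : ℕ) : ℝ) - x.val n| ≤ |1 / ((M + m + 1 : ℕ) : ℝ)| + |x.val n| :=
          abs_sub _ _
      _ < ε / 2 + ε / 2 := by
          rw [abs_of_pos (by positivity)]
          exact add_lt_add (hm.trans_lt hM) hn
      _ = ε := add_halves ε

end CompleteErdosSpace

/-- `F(𝔈_c)` is of the first category in itself, and consequently it is not homeomorphic
to complete Erdős space. -/
theorem hypFin_completeErdos_meager_and_not_homeomorph :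
    IsMeagre (Set.univ : Set (HypFin CompleteErdosSpace)) ∧
    ¬ Nonempty (HypFin CompleteErdosSpace ≃ₜ CompleteErdosSpace) := by
  have hmeagre : IsMeagre (univ : Set (HypFin CompleteErdosSpace)) :=
    HypFin.isMeagre_univ fun _ => CompleteErdosSpace.infinite_of_isOpen
  refine ⟨hmeagre, fun ⟨e⟩ => ?_⟩
  have : BaireSpace (HypFin CompleteErdosSpace) := e.symm.baireSpace
  have : Nonempty (HypFin CompleteErdosSpace) := e.surjective.nonempty
  exact not_isMeagre_of_isOpen isOpen_univ univ_nonempty hmeagre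
end
end
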